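/- Let α, β, k, β₁, k_θ > 0, let 𝒢 ∈ ℝ^{p×p} be constant symmetric and Q ∈ ℝ^{p×n} constant. Let p̃, r, η : ℝ → ℝⁿ be differentiable with p̃' = q̃ where q̃ ≜ r − αp̃ − η, η' = −βη − kr − αq̃, and r'(t) = −k r(t) + φ(t) − α² p̃(t) + (k+α) η(t) for a continuous φ : ℝ → ℝⁿ. Let Γ : ℝ → ℝ^{p×p} be differentiable, symmetric- and invertible-valued, with Γ' = β₁Γ − k_θΓ𝒢Γ, and let θ̃ : ℝ → ℝ^{p×n} be differentiable with θ̃' = −k_θΓ𝒢θ̃ − k_θΓQ. Then V(t) ≜ ½( α²‖p̃(t)‖² + ‖r(t)‖² + ‖η(t)‖² + tr(θ̃(t)ᵀΓ(t)⁻¹θ̃(t)) ) is differentiable with V'(t) = −α³‖p̃(t)‖² − k‖r(t)‖² − (β − α)‖η(t)‖² − ½ tr( θ̃(t)ᵀ( k_θ𝒢 + β₁Γ(t)⁻¹ )θ̃(t) ) + ⟨r(t), φ(t)⟩ − k_θ tr( θ̃(t)ᵀ Q ) for all t. -/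

import Mathlib

/-!
Differentiate `V` term by term. In the state part, `d/dt ½‖x‖² = ⟪x, x'⟫`, and after substituting
the error dynamics the cross terms `⟪p̃, r⟫`, `⟪p̃, η⟫`, `⟪r, η⟫` cancel. In the parameter part,
`(Γ⁻¹)' = -Γ⁻¹Γ'Γ⁻¹ = k_θ𝒢 - β₁Γ⁻¹` by the Riccati equation for `Γ`; since `Γ⁻¹` is symmetric,
`d/dt tr(θ̃ᵀΓ⁻¹θ̃) = tr(θ̃ᵀ(Γ⁻¹)'θ̃) + 2 tr(θ̃ᵀΓ⁻¹θ̃')`, and `Γ⁻¹θ̃' = -k_θ(𝒢θ̃ + Q)`.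
-/

open Matrix Filter Topology

attribute [local instance] Matrix.normedAddCommGroup Matrix.normedSpace

section MatrixCalculus

variable {𝕜 : Type*} [NontriviallyNormedField 𝕜] {l m n : Type*} [Fintype n] {t : 𝕜}

theorem hasDerivAt_matrix_iff {A : 𝕜 → Matrix m n 𝕜} {A' : Matrix m n 𝕜} :
    HasDerivAt A A' t ↔ ∀ i j, HasDerivAt (fun s => A s i j) (A' i j) t :=
  hasDerivAt_pi.trans (forall_congr' fun _ => hasDerivAt_pi)

theorem differentiableAt_matrix_iff {A : 𝕜 → Matrix m n 𝕜} :
    DifferentiableAt 𝕜 A t ↔ ∀ i j, DifferentiableAt 𝕜 (fun s => A s i j) t :=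
  differentiableAt_pi.trans (forall_congr' fun _ => differentiableAt_pi)

variable [Fintype m]

theorem HasDerivAt.matrix_transpose {A : 𝕜 → Matrix m n 𝕜} {A' : Matrix m n 𝕜}
    (h : HasDerivAt A A' t) : HasDerivAt (fun s => (A s)ᵀ) A'ᵀ t :=
  hasDerivAt_matrix_iff.2 fun i j => hasDerivAt_matrix_iff.1 h j i

theorem HasDerivAt.matrix_mul {A : 𝕜 → Matrix l m 𝕜} {A' : Matrix l m 𝕜}
    {B : 𝕜 → Matrix m n 𝕜} {B' : Matrix m n 𝕜} (hA : HasDerivAt A A' t)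
    (hB : HasDerivAt B B' t) : HasDerivAt (fun s => A s * B s) (A' * B t + A t * B') t := by
  refine hasDerivAt_matrix_iff.2 fun i j => ?_
  simp only [Matrix.add_apply, Matrix.mul_apply, ← Finset.sum_add_distrib]
  exact HasDerivAt.fun_sum fun k _ =>
    (hasDerivAt_matrix_iff.1 hA i k).mul (hasDerivAt_matrix_iff.1 hB k j)

theorem HasDerivAt.matrix_trace {A : 𝕜 → Matrix n n 𝕜} {A' : Matrix n n 𝕜}
    (h : HasDerivAt A A' t) : HasDerivAt (fun s => (A s).trace) A'.trace t :=
  HasDerivAt.fun_sum fun i _ => hasDerivAt_matrix_iff.1 h i i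

theorem HasDerivAt.trace_transpose_mul_mul {Θ : 𝕜 → Matrix n m 𝕜} {Θ' : Matrix n m 𝕜}
    {P : 𝕜 → Matrix n n 𝕜} {P' : Matrix n n 𝕜} (hΘ : HasDerivAt Θ Θ' t)
    (hP : HasDerivAt P P' t) (hsymm : (P t).IsSymm) :
    HasDerivAt (fun s => ((Θ s)ᵀ * P s * Θ s).trace)
      (((Θ t)ᵀ * P' * Θ t).trace + 2 * ((Θ t)ᵀ * P t * Θ').trace) t := by
  refine ((hΘ.matrix_transpose.matrix_mul hP).matrix_mul hΘ).matrix_trace.congr_deriv ?_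
  have hswap : (Θ'ᵀ * P t * Θ t).trace = ((Θ t)ᵀ * P t * Θ').trace := by
    rw [← trace_transpose]
    simp only [transpose_mul, transpose_transpose, hsymm.eq, Matrix.mul_assoc]
  simp only [Matrix.add_mul, trace_add, hswap]
  ring

variable [DecidableEq n]

theorem DifferentiableAt.matrix_det {A : 𝕜 → Matrix n n 𝕜} (h : DifferentiableAt 𝕜 A t) :
    DifferentiableAt 𝕜 (fun s => (A s).det) t := by
  simp only [Matrix.det_apply']
  exact DifferentiableAt.fun_sum fun σ _ => (DifferentiableAt.fun_finsetProd fun i _ =>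
    differentiableAt_matrix_iff.1 h (σ i) i).const_mul _

theorem DifferentiableAt.matrix_adjugate {A : 𝕜 → Matrix n n 𝕜} (h : DifferentiableAt 𝕜 A t) :
    DifferentiableAt 𝕜 (fun s => (A s).adjugate) t := by
  refine differentiableAt_matrix_iff.2 fun i j => ?_
  simp only [Matrix.adjugate_apply]
  refine DifferentiableAt.matrix_det (differentiableAt_matrix_iff.2 fun k l => ?_)
  simp only [Matrix.updateRow_apply]
  split_ifs
  · exact differentiableAt_const _
  · exact differentiableAt_matrix_iff.1 h k l

theorem DifferentiableAt.matrix_inv {A : 𝕜 → Matrix n n 𝕜} (h : DifferentiableAt 𝕜 A t)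
    (hA : IsUnit (A t)) : DifferentiableAt 𝕜 (fun s => (A s)⁻¹) t := by
  simp only [Matrix.inv_def, Ring.inverse_eq_inv']
  exact (h.matrix_det.inv ((Matrix.isUnit_iff_isUnit_det _).1 hA).ne_zero).smul
    h.matrix_adjugate

theorem HasDerivAt.matrix_inv {A : 𝕜 → Matrix n n 𝕜} {A' : Matrix n n 𝕜}
    (h : HasDerivAt A A' t) (hA : IsUnit (A t)) :
    HasDerivAt (fun s => (A s)⁻¹) (-((A t)⁻¹ * A' * (A t)⁻¹)) t := by
  obtain ⟨D, hD⟩ : ∃ D, HasDerivAt (fun s => (A s)⁻¹) D t :=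
    ⟨_, (h.differentiableAt.matrix_inv hA).hasDerivAt⟩
  have hdet := (Matrix.isUnit_iff_isUnit_det _).1 hA
  have hunit : (fun s => A s * (A s)⁻¹) =ᶠ[𝓝 t] fun _ => 1 :=
    (h.differentiableAt.matrix_det.continuousAt.eventually_ne hdet.ne_zero).mono
      fun s hs => Matrix.mul_nonsing_inv _ (isUnit_iff_ne_zero.2 hs)
  have hzero : A' * (A t)⁻¹ + A t * D = 0 :=
    (h.matrix_mul hD).unique ((hasDerivAt_const t 1).congr_of_eventuallyEq hunit)
  refine hD.congr_deriv ?_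
  calc D = (A t)⁻¹ * (A t * D) := (Matrix.nonsing_inv_mul_cancel_left _ _ hdet).symm
    _ = (A t)⁻¹ * -(A' * (A t)⁻¹) := by rw [eq_neg_of_add_eq_zero_right hzero]
    _ = -((A t)⁻¹ * A' * (A t)⁻¹) := by rw [Matrix.mul_neg, Matrix.mul_assoc]

theorem HasDerivAt.matrix_inv_of_riccati {Γ : 𝕜 → Matrix n n 𝕜} {𝒢 : Matrix n n 𝕜} {β₁ kθ : 𝕜}
    (hΓ : HasDerivAt Γ (β₁ • Γ t - kθ • (Γ t * 𝒢 * Γ t)) t) (hunit : IsUnit (Γ t)) :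
    HasDerivAt (fun s => (Γ s)⁻¹) (kθ • 𝒢 - β₁ • (Γ t)⁻¹) t := by
  have hdet := (Matrix.isUnit_iff_isUnit_det _).1 hunit
  refine (hΓ.matrix_inv hunit).congr_deriv ?_
  simp only [Matrix.mul_sub, Matrix.sub_mul, Matrix.mul_smul, Matrix.smul_mul, Matrix.mul_assoc,
    Matrix.nonsing_inv_mul_cancel_left _ _ hdet, Matrix.mul_nonsing_inv _ hdet, Matrix.mul_one,
    Matrix.one_mul, Matrix.nonsing_inv_mul _ hdet, neg_sub]

theorem HasDerivAt.trace_transpose_inv_mul_of_riccati {Γ : 𝕜 → Matrix n n 𝕜}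
    {Θ : 𝕜 → Matrix n m 𝕜} {𝒢 : Matrix n n 𝕜} {Q : Matrix n m 𝕜} {β₁ kθ : 𝕜}
    (hΘ : HasDerivAt Θ (-(kθ • (Γ t * 𝒢 * Θ t)) - kθ • (Γ t * Q)) t)
    (hΓ : HasDerivAt Γ (β₁ • Γ t - kθ • (Γ t * 𝒢 * Γ t)) t) (hsymm : (Γ t).IsSymm)
    (hunit : IsUnit (Γ t)) :
    HasDerivAt (fun s => ((Θ s)ᵀ * (Γ s)⁻¹ * Θ s).trace)
      (-((Θ t)ᵀ * (kθ • 𝒢 + β₁ • (Γ t)⁻¹) * Θ t).trace - 2 * kθ * ((Θ t)ᵀ * Q).trace) t := by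
  have hdet := (Matrix.isUnit_iff_isUnit_det _).1 hunit
  refine (hΘ.trace_transpose_mul_mul (hΓ.matrix_inv_of_riccati hunit) hsymm.inv).congr_deriv ?_
  simp only [Matrix.mul_sub, Matrix.mul_neg, Matrix.mul_smul, Matrix.mul_assoc,
    Matrix.nonsing_inv_mul_cancel_left _ _ hdet, Matrix.mul_add, Matrix.add_mul, Matrix.sub_mul,
    Matrix.smul_mul, trace_add, trace_sub, trace_neg, trace_smul, smul_eq_mul]
  ring

end MatrixCalculus

theorem hasDerivAt_error_energy {E : Type*} [NormedAddCommGroup E] [InnerProductSpace ℝ E]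
    {α β k t : ℝ} {p r η : ℝ → E} {φ : E}
    (hp : HasDerivAt p (r t - α • p t - η t) t)
    (hη : HasDerivAt η (-(β • η t) - k • r t - α • (r t - α • p t - η t)) t)
    (hr : HasDerivAt r (-(k • r t) + φ - α ^ 2 • p t + (k + α) • η t) t) :
    HasDerivAt (fun s => α ^ 2 * ‖p s‖ ^ 2 + ‖r s‖ ^ 2 + ‖η s‖ ^ 2)
      (2 * (-(α ^ 3 * ‖p t‖ ^ 2) - k * ‖r t‖ ^ 2 - (β - α) * ‖η t‖ ^ 2 + inner ℝ (r t) φ)) t := by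
  refine (((hp.norm_sq.const_mul (α ^ 2)).add hr.norm_sq).add hη.norm_sq).congr_deriv ?_
  simp only [inner_add_right, inner_sub_right, inner_neg_right, real_inner_smul_right,
    real_inner_self_eq_norm_sq, real_inner_comm (p t) (r t), real_inner_comm (p t) (η t),
    real_inner_comm (r t) (η t)]
  ring

theorem stmt_12_general (n d : ℕ) (α β k β₁ kθ : ℝ)
    (𝒢 : Matrix (Fin d) (Fin d) ℝ) (Q : Matrix (Fin d) (Fin n) ℝ)
    (ptil r η φ : ℝ → EuclideanSpace ℝ (Fin n))
    (hptil : ∀ t, HasDerivAt ptil (r t - α • ptil t - η t) t)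
    (hη : ∀ t, HasDerivAt η
      (-(β • η t) - k • r t - α • (r t - α • ptil t - η t)) t)
    (hr : ∀ t, HasDerivAt r
      (-(k • r t) + φ t - (α ^ 2) • ptil t + (k + α) • η t) t)
    (Γ : ℝ → Matrix (Fin d) (Fin d) ℝ)
    (hΓsym : ∀ t, (Γ t).IsSymm) (hΓunit : ∀ t, IsUnit (Γ t))
    (hΓ' : ∀ t, HasDerivAt Γ (β₁ • Γ t - kθ • (Γ t * 𝒢 * Γ t)) t)
    (θtil : ℝ → Matrix (Fin d) (Fin n) ℝ)
    (hθtil' : ∀ t, HasDerivAt θtil (-(kθ • (Γ t * 𝒢 * θtil t)) - kθ • (Γ t * Q)) t)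
    (t : ℝ) :
    HasDerivAt (fun s => (1 / 2) * (α ^ 2 * ‖ptil s‖ ^ 2 + ‖r s‖ ^ 2 + ‖η s‖ ^ 2
        + ((θtil s)ᵀ * (Γ s)⁻¹ * θtil s).trace))
      (-(α ^ 3 * ‖ptil t‖ ^ 2) - k * ‖r t‖ ^ 2 - (β - α) * ‖η t‖ ^ 2
        - (1 / 2) * ((θtil t)ᵀ * (kθ • 𝒢 + β₁ • (Γ t)⁻¹) * θtil t).trace
        + inner ℝ (r t) (φ t) - kθ * ((θtil t)ᵀ * Q).trace) t := by
  have hstate := hasDerivAt_error_energy (hptil t) (hη t) (hr t)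
  have hparam := (hθtil' t).trace_transpose_inv_mul_of_riccati (hΓ' t) (hΓsym t) (hΓunit t)
  refine ((hstate.add hparam).const_mul (1 / 2)).congr_deriv ?_
  ring

theorem stmt_12 (n d : ℕ) (α β k β₁ kθ : ℝ)
    (hα : 0 < α) (hβ : 0 < β) (hk : 0 < k) (hβ₁ : 0 < β₁) (hkθ : 0 < kθ)
    (𝒢 : Matrix (Fin d) (Fin d) ℝ) (h𝒢sym : 𝒢.IsSymm) (Q : Matrix (Fin d) (Fin n) ℝ)
    (ptil r η φ : ℝ → EuclideanSpace ℝ (Fin n)) (hφ : Continuous φ)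
    (hptil : ∀ t, HasDerivAt ptil (r t - α • ptil t - η t) t)
    (hη : ∀ t, HasDerivAt η
      (-(β • η t) - k • r t - α • (r t - α • ptil t - η t)) t)
    (hr : ∀ t, HasDerivAt r
      (-(k • r t) + φ t - (α ^ 2) • ptil t + (k + α) • η t) t)
    (Γ : ℝ → Matrix (Fin d) (Fin d) ℝ)
    (hΓsym : ∀ t, (Γ t).IsSymm) (hΓunit : ∀ t, IsUnit (Γ t))
    (hΓ' : ∀ t, HasDerivAt Γ (β₁ • Γ t - kθ • (Γ t * 𝒢 * Γ t)) t)
    (θtil : ℝ → Matrix (Fin d) (Fin n) ℝ)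
    (hθtil' : ∀ t, HasDerivAt θtil (-(kθ • (Γ t * 𝒢 * θtil t)) - kθ • (Γ t * Q)) t)
    (t : ℝ) :
    HasDerivAt (fun s => (1 / 2) * (α ^ 2 * ‖ptil s‖ ^ 2 + ‖r s‖ ^ 2 + ‖η s‖ ^ 2
        + ((θtil s)ᵀ * (Γ s)⁻¹ * θtil s).trace))
      (-(α ^ 3 * ‖ptil t‖ ^ 2) - k * ‖r t‖ ^ 2 - (β - α) * ‖η t‖ ^ 2
        - (1 / 2) * ((θtil t)ᵀ * (kθ • 𝒢 + β₁ • (Γ t)⁻¹) * θtil t).trace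
        + inner ℝ (r t) (φ t) - kθ * ((θtil t)ᵀ * Q).trace) t :=
  stmt_12_general n d α β k β₁ kθ 𝒢 Q ptil r η φ hptil hη hr Γ hΓsym hΓunit hΓ' θtil hθtil' t
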